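/- For a semifree DG B-module N with semifree basis {e_λ}, the Atiyah homomorphism satisfies α = −∂^Conn(φ(δ)), where φ(δ) is the trivial δ-connection on N along J with respect to {e_λ}. -/

import Mathlib

/- ------------------------------------------------------------------
A self-contained framework for differential graded (DG) homological
algebra, following Nasseh–Ono–Yoshino, "Connections and naïve lifting
of DG modules".
------------------------------------------------------------------ -/

noncomputable section

namespace DG

universe u

/-- The sign `(-1)^n` for `n : ℤ`. -/
def sgn (n : ℤ) : ℤ := ((-1 : ℤˣ) ^ n : ℤˣ)

/-- A (non-negatively graded, strictly graded-commutative) DG `R`-algebra: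
a graded `R`-algebra `A = ⊕_{n ≥ 0} A_n` with `ab = (-1)^{|a||b|} ba`,
`a² = 0` for `|a|` odd, and a degree `-1` differential `d` with `d ∘ d = 0`
satisfying the Leibniz rule. -/
structure DGAlg (R : Type u) [CommRing R] : Type (u + 1) where
  carrier : Type u
  [ring : Ring carrier]
  [alg : Algebra R carrier]
  gr : ℤ → Submodule R carrier
  internal : DirectSum.IsInternal gr
  nonneg : ∀ i : ℤ, i < 0 → gr i = ⊥
  one_mem : (1 : carrier) ∈ gr 0
  mul_mem : ∀ {i j : ℤ} {a b : carrier}, a ∈ gr i → b ∈ gr j → a * b ∈ gr (i + j)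
  gcomm : ∀ {i j : ℤ} {a b : carrier}, a ∈ gr i → b ∈ gr j → a * b = sgn (i * j) • (b * a)
  sq_zero : ∀ {i : ℤ} {a : carrier}, a ∈ gr i → Odd i → a * a = 0
  d : carrier →ₗ[R] carrier
  d_mem : ∀ {i : ℤ} {a : carrier}, a ∈ gr i → d a ∈ gr (i - 1)
  d_d : ∀ a : carrier, d (d a) = 0
  leibniz : ∀ {i : ℤ} {a : carrier} (b : carrier), a ∈ gr i →
    d (a * b) = d a * b + sgn i • (a * d b)

attribute [instance] DGAlg.ring DGAlg.alg

variable {R : Type u} [CommRing R]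

/-- A right DG module over a DG `R`-algebra `S`. -/
structure DGMod (S : DGAlg R) : Type (u + 1) where
  carrier : Type u
  [acg : AddCommGroup carrier]
  [mod : Module R carrier]
  /-- the right `S`-action -/
  smul : carrier → S.carrier → carrier
  smul_add : ∀ (m : carrier) (a b : S.carrier), smul m (a + b) = smul m a + smul m b
  add_smul : ∀ (m n : carrier) (a : S.carrier), smul (m + n) a = smul m a + smul n a
  smul_rsmul : ∀ (r : R) (m : carrier) (a : S.carrier), smul (r • m) a = r • smul m a
  smul_one : ∀ m : carrier, smul m 1 = m
  smul_mul : ∀ (m : carrier) (a b : S.carrier), smul m (a * b) = smul (smul m a) b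
  smul_algebraMap : ∀ (r : R) (m : carrier), smul m (algebraMap R S.carrier r) = r • m
  gr : ℤ → Submodule R carrier
  internal : DirectSum.IsInternal gr
  smul_mem : ∀ {i j : ℤ} {m : carrier} {a : S.carrier},
    m ∈ gr i → a ∈ S.gr j → smul m a ∈ gr (i + j)
  d : carrier →ₗ[R] carrier
  d_mem : ∀ {i : ℤ} {m : carrier}, m ∈ gr i → d m ∈ gr (i - 1)
  d_d : ∀ m : carrier, d (d m) = 0
  leibniz : ∀ {i : ℤ} {m : carrier} (a : S.carrier), m ∈ gr i →
    d (smul m a) = smul (d m) a + sgn i • smul m (S.d a)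

attribute [instance] DGMod.acg DGMod.mod

/-- Decomposition of a DG algebra into its homogeneous components. -/
noncomputable def DGAlg.dec (S : DGAlg R) : S.carrier ≃ DirectSum ℤ (fun i => S.gr i) :=
  (Equiv.ofBijective _ S.internal).symm

/-- Decomposition of a DG module into its homogeneous components. -/
noncomputable def DGMod.dec {S : DGAlg R} (M : DGMod S) :
    M.carrier ≃ DirectSum ℤ (fun i => M.gr i) :=
  (Equiv.ofBijective _ M.internal).symm

/-- The left action `a • x := (-1)^{|a||x|} x a` on a right DG module over the
strictly graded-commutative DG algebra `S`, extended bilinearly. -/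
noncomputable def DGMod.lsmul {S : DGAlg R} (M : DGMod S) (a : S.carrier) (x : M.carrier) :
    M.carrier :=
  (DFinsupp.sumAddHom (fun i => AddMonoidHom.mk'
    (fun ai : S.gr i => DFinsupp.sumAddHom (fun j => AddMonoidHom.mk'
      (fun xj : M.gr j => sgn (i * j) • M.smul (xj : M.carrier) (ai : S.carrier))
      (by intro x y; simp [M.add_smul, smul_add]))
    )
    (by
      intro ai ai'
      refine DFinsupp.addHom_ext fun j xj => ?_
      simp [DFinsupp.sumAddHom_single, M.smul_add, smul_add]))
    (S.dec a)) (M.dec x)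

/-- `f : M → N` is a graded `S`-linear map of degree `n`. -/
def IsGLin {S : DGAlg R} (M N : DGMod S) (n : ℤ) (f : M.carrier → N.carrier) : Prop :=
  (∀ x y : M.carrier, f (x + y) = f x + f y) ∧
  (∀ (r : R) (x : M.carrier), f (r • x) = r • f x) ∧
  (∀ (x : M.carrier) (a : S.carrier), f (M.smul x a) = N.smul (f x) a) ∧
  (∀ i : ℤ, ∀ x ∈ M.gr i, f x ∈ N.gr (i + n))

/-- `f` belongs to `Hom_S(M,N) = ⊕_{n ∈ ℤ} Hom_{gr(S)}(M, N(n))`, i.e. `f` is a finite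
sum of homogeneous graded `S`-linear maps. -/
def InSHom {S : DGAlg R} (M N : DGMod S) (f : M.carrier → N.carrier) : Prop :=
  ∃ (s : Finset ℤ) (g : ℤ → M.carrier → N.carrier),
    (∀ n ∈ s, IsGLin M N n (g n)) ∧ ∀ x, f x = ∑ n ∈ s, g n x

/-- A homomorphism of DG `R`-algebras. -/
structure DGHom (S T : DGAlg R) : Type u where
  toFun : S.carrier → T.carrier
  map_one : toFun 1 = 1
  map_mul : ∀ a b, toFun (a * b) = toFun a * toFun b
  map_add : ∀ a b, toFun (a + b) = toFun a + toFun b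
  map_algebraMap : ∀ r : R, toFun (algebraMap R S.carrier r) = algebraMap R T.carrier r
  map_gr : ∀ {i : ℤ} {a : S.carrier}, a ∈ S.gr i → toFun a ∈ T.gr i
  map_d : ∀ a, toFun (S.d a) = T.d (toFun a)

/-- The underlying ring homomorphism of a DG algebra homomorphism. -/
def DGHom.toRingHom {S T : DGAlg R} (f : DGHom S T) : S.carrier →+* T.carrier where
  toFun := f.toFun
  map_one' := f.map_one
  map_mul' := f.map_mul
  map_zero' := by
    have h := f.map_add 0 0
    rw [add_zero] at h
    exact (add_eq_left.mp h.symm)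
  map_add' := f.map_add

/-- The basic setup of the paper: a DG `R`-algebra homomorphism `φ : A → B` with `B`
projective as an underlying (graded) `A`-module, together with the enveloping DG algebra
`E = Bᵉ = B ⊗_A B` (axiomatized by its structure maps `inl : b ↦ b ⊗ 1`,
`inr : b ↦ 1 ⊗ b`, the multiplication map `mulB = π_B : Bᵉ → B` and the universal
property of the tensor product), the diagonal ideal `J = ker π_B` (a DG `Bᵉ`-module
with structure monomorphism `ιJ`), and the universal derivation
`δ : B → J`, `δ(b) = b ⊗ 1 - 1 ⊗ b`. -/
structure EnvSetup (R : Type u) [CommRing R] : Type (u + 1) where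
  A : DGAlg R
  B : DGAlg R
  φ : DGHom A B
  projB :
    letI : Module A.carrier B.carrier := Module.compHom B.carrier φ.toRingHom
    Module.Projective A.carrier B.carrier
  E : DGAlg R
  inl : DGHom B E
  inr : DGHom B E
  inl_inr_phi : ∀ a : A.carrier, inl.toFun (φ.toFun a) = inr.toFun (φ.toFun a)
  mulB : DGHom E B
  mulB_inl : ∀ b, mulB.toFun (inl.toFun b) = b
  mulB_inr : ∀ b, mulB.toFun (inr.toFun b) = b
  span : ∀ x : E.carrier,
    x ∈ Submodule.span R {y : E.carrier | ∃ b b', y = inl.toFun b * inr.toFun b'}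
  univ : ∀ (Q : Type u) [AddCommGroup Q] [Module R Q] (h : B.carrier → B.carrier → Q),
    (∀ b₁ b₂ b', h (b₁ + b₂) b' = h b₁ b' + h b₂ b') →
    (∀ b b₁ b₂, h b (b₁ + b₂) = h b b₁ + h b b₂) →
    (∀ (r : R) b b', h (r • b) b' = r • h b b') →
    (∀ (r : R) b b', h b (r • b') = r • h b b') →
    (∀ (a : A.carrier) (b b' : B.carrier), h (b * φ.toFun a) b' = h b (φ.toFun a * b')) →
    ∃! H : E.carrier →ₗ[R] Q, ∀ b b', H (inl.toFun b * inr.toFun b') = h b b'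
  J : DGMod E
  ιJ : J.carrier → E.carrier
  ιJ_add : ∀ x y, ιJ (x + y) = ιJ x + ιJ y
  ιJ_rsmul : ∀ (r : R) x, ιJ (r • x) = r • ιJ x
  ιJ_smul : ∀ x e, ιJ (J.smul x e) = ιJ x * e
  ιJ_gr : ∀ (i : ℤ) (x : J.carrier), x ∈ J.gr i ↔ ιJ x ∈ E.gr i
  ιJ_d : ∀ x, ιJ (J.d x) = E.d (ιJ x)
  ιJ_inj : Function.Injective ιJ
  ιJ_range : ∀ e : E.carrier, (∃ x, ιJ x = e) ↔ mulB.toFun e = 0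
  δ : B.carrier → J.carrier
  ιJ_δ : ∀ b, ιJ (δ b) = inl.toFun b - inr.toFun b

/-- `D : B → X` is an `A`-derivation of degree `n` with values in the DG `Bᵉ`-module `X`:
an `A`-linear graded map of degree `n` satisfying the Leibniz rule
`D(bc) = D(b)·(1⊗c) + (-1)^{|b||c|} D(c)·(b⊗1)`
(equivalently, `D(bc) = D(b)c + (-1)^{|D||b|} b D(c)`). -/
def IsDer (P : EnvSetup R) (X : DGMod P.E) (n : ℤ) (D : P.B.carrier → X.carrier) : Prop :=
  (∀ b c, D (b + c) = D b + D c) ∧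
  (∀ (r : R) b, D (r • b) = r • D b) ∧
  (∀ (b : P.B.carrier) (a : P.A.carrier),
    D (b * P.φ.toFun a) = X.smul (D b) (P.inr.toFun (P.φ.toFun a))) ∧
  (∀ i : ℤ, ∀ b ∈ P.B.gr i, D b ∈ X.gr (i + n)) ∧
  (∀ (i j : ℤ) (b c : P.B.carrier), b ∈ P.B.gr i → c ∈ P.B.gr j →
    D (b * c) = X.smul (D b) (P.inr.toFun c) + sgn (i * j) • X.smul (D c) (P.inl.toFun b))

/-- `D` belongs to `Der_A(B,X) = ⊕_{n ∈ ℤ} Der_A(B,X)_n`. -/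
def InSDer (P : EnvSetup R) (X : DGMod P.E) (D : P.B.carrier → X.carrier) : Prop :=
  ∃ (s : Finset ℤ) (g : ℤ → P.B.carrier → X.carrier),
    (∀ n ∈ s, IsDer P X n (g n)) ∧ ∀ b, D b = ∑ n ∈ s, g n b

end DG
/- Part 2 appended to common -/
namespace DG

variable {R : Type u} [CommRing R]

/-- The DG tensor product `N ⊗_B X` of a DG `B`-module `N` and a DG `Bᵉ`-module `X`
(a DG `B`-module via the right `B`-action on `X` through `inr`), axiomatized by its
structure map `t : (n,x) ↦ n ⊗ x`, `B`-balancedness `nb ⊗ x = (-1)^{|b||x|} n ⊗ x·(b⊗1)`,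
spanning, and the universal property. -/
structure TensorBX (P : EnvSetup R) (N : DGMod P.B) (X : DGMod P.E) : Type (u + 1) where
  T : DGMod P.B
  t : N.carrier → X.carrier → T.carrier
  t_addl : ∀ m m' x, t (m + m') x = t m x + t m' x
  t_addr : ∀ m x x', t m (x + x') = t m x + t m x'
  t_rsml : ∀ (r : R) m x, t (r • m) x = r • t m x
  t_rsmr : ∀ (r : R) m x, t m (r • x) = r • t m x
  t_smul : ∀ m x b, t m (X.smul x (P.inr.toFun b)) = T.smul (t m x) b
  t_bal : ∀ {i j : ℤ} (m : N.carrier) (x : X.carrier) (b : P.B.carrier),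
    b ∈ P.B.gr i → x ∈ X.gr j →
    t (N.smul m b) x = sgn (i * j) • t m (X.smul x (P.inl.toFun b))
  t_gr : ∀ {i j : ℤ} {m x}, m ∈ N.gr i → x ∈ X.gr j → t m x ∈ T.gr (i + j)
  t_d : ∀ {i : ℤ} (m x), m ∈ N.gr i → T.d (t m x) = t (N.d m) x + sgn i • t m (X.d x)
  span : ∀ y : T.carrier, y ∈ Submodule.span R {z : T.carrier | ∃ m x, z = t m x}
  univ : ∀ (Q : Type u) [AddCommGroup Q] [Module R Q] (h : N.carrier → X.carrier → Q),
    (∀ m m' x, h (m + m') x = h m x + h m' x) →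
    (∀ m x x', h m (x + x') = h m x + h m x') →
    (∀ (r : R) m x, h (r • m) x = r • h m x) →
    (∀ (r : R) m x, h m (r • x) = r • h m x) →
    (∀ {i j : ℤ} (m x) (b : P.B.carrier), b ∈ P.B.gr i → x ∈ X.gr j →
      h (N.smul m b) x = sgn (i * j) • h m (X.smul x (P.inl.toFun b))) →
    ∃! H : T.carrier →ₗ[R] Q, ∀ m x, H (t m x) = h m x

/-- `ψ : N → N ⊗_B X` is a `D`-connection on `N` along `X` of degree `n = |D|`:
a graded `A`-linear map of degree `n` with
`ψ(xb) = ψ(x)b + (-1)^{|D||x|} x ⊗ D(b)`. -/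
def IsConn {P : EnvSetup R} {N : DGMod P.B} {X : DGMod P.E} (τ : TensorBX P N X)
    (n : ℤ) (D : P.B.carrier → X.carrier) (ψ : N.carrier → τ.T.carrier) : Prop :=
  (∀ x y : N.carrier, ψ (x + y) = ψ x + ψ y) ∧
  (∀ (r : R) (x : N.carrier), ψ (r • x) = r • ψ x) ∧
  (∀ i : ℤ, ∀ x ∈ N.gr i, ψ x ∈ τ.T.gr (i + n)) ∧
  (∀ (i : ℤ) (x : N.carrier) (b : P.B.carrier), x ∈ N.gr i →
    ψ (N.smul x b) = τ.T.smul (ψ x) b + sgn (n * i) • τ.t x (D b))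

/-- `ψ` belongs to `Conn(N, N ⊗_B X) = ⊕_{n ∈ ℤ} Conn(N, N ⊗_B X)_n`. -/
def InSConn {P : EnvSetup R} {N : DGMod P.B} {X : DGMod P.E} (τ : TensorBX P N X)
    (ψ : N.carrier → τ.T.carrier) : Prop :=
  ∃ (s : Finset ℤ) (g : ℤ → N.carrier → τ.T.carrier) (Df : ℤ → P.B.carrier → X.carrier),
    (∀ n ∈ s, IsDer P X n (Df n) ∧ IsConn τ n (Df n) (g n)) ∧ ∀ x, ψ x = ∑ n ∈ s, g n x

/-- An `Der_A(B,X)`-connection on `N` (along the `Bᵉ`-module `X`): a DG `B`-module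
homomorphism `∇ : Der_A(B,X) → Conn(N, N ⊗_B X)` such that `∇_D` is a `D`-connection
for every `D`.  (Equivalently, a DG `B`-module splitting of `ν`.) -/
def IsLConn {P : EnvSetup R} {N : DGMod P.B} {X : DGMod P.E} (τ : TensorBX P N X)
    (Cn : (P.B.carrier → X.carrier) → N.carrier → τ.T.carrier) : Prop :=
  (∀ (n : ℤ) (D), IsDer P X n D → IsConn τ n D (Cn D)) ∧
  (∀ D D', InSDer P X D → InSDer P X D' →
    ∀ x, Cn (fun b => D b + D' b) x = Cn D x + Cn D' x) ∧
  (∀ (r : R) (D), InSDer P X D → ∀ x, Cn (fun b => r • D b) x = r • Cn D x) ∧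
  (∀ (k n : ℤ) (b : P.B.carrier) (D), b ∈ P.B.gr k → IsDer P X n D →
    ∀ x, Cn (fun c => X.lsmul (P.inl.toFun b) (D c)) x = τ.T.lsmul b (Cn D x)) ∧
  (∀ (n : ℤ) (D), IsDer P X n D →
    ∀ x, Cn (fun b => X.d (D b) - sgn n • D (P.B.d b)) x
      = τ.T.d (Cn D x) - sgn n • Cn D (N.d x))

/-- The DG tensor product `N|_A ⊗_A B` (a DG `B`-module through the right factor),
together with the canonical DG `B`-module epimorphism `pr = π_N : N|_A ⊗_A B → N`,
`n ⊗ b ↦ nb`. -/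
structure TensorAB (P : EnvSetup R) (N : DGMod P.B) : Type (u + 1) where
  T : DGMod P.B
  t : N.carrier → P.B.carrier → T.carrier
  t_addl : ∀ m m' b, t (m + m') b = t m b + t m' b
  t_addr : ∀ m b b', t m (b + b') = t m b + t m b'
  t_rsml : ∀ (r : R) m b, t (r • m) b = r • t m b
  t_rsmr : ∀ (r : R) m b, t m (r • b) = r • t m b
  t_smul : ∀ m b b', t m (b * b') = T.smul (t m b) b'
  t_bal : ∀ (m : N.carrier) (a : P.A.carrier) (b : P.B.carrier),
    t (N.smul m (P.φ.toFun a)) b = t m (P.φ.toFun a * b)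
  t_gr : ∀ {i j : ℤ} {m b}, m ∈ N.gr i → b ∈ P.B.gr j → t m b ∈ T.gr (i + j)
  t_d : ∀ {i : ℤ} (m b), m ∈ N.gr i → T.d (t m b) = t (N.d m) b + sgn i • t m (P.B.d b)
  span : ∀ y : T.carrier, y ∈ Submodule.span R {z : T.carrier | ∃ m b, z = t m b}
  univ : ∀ (Q : Type u) [AddCommGroup Q] [Module R Q] (h : N.carrier → P.B.carrier → Q),
    (∀ m m' b, h (m + m') b = h m b + h m' b) →
    (∀ m b b', h m (b + b') = h m b + h m b') →
    (∀ (r : R) m b, h (r • m) b = r • h m b) →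
    (∀ (r : R) m b, h m (r • b) = r • h m b) →
    (∀ (m : N.carrier) (a : P.A.carrier) (b : P.B.carrier),
      h (N.smul m (P.φ.toFun a)) b = h m (P.φ.toFun a * b)) →
    ∃! H : T.carrier →ₗ[R] Q, ∀ m b, H (t m b) = h m b
  pr : T.carrier → N.carrier
  pr_add : ∀ y y', pr (y + y') = pr y + pr y'
  pr_rsmul : ∀ (r : R) y, pr (r • y) = r • pr y
  pr_smul : ∀ y b, pr (T.smul y b) = N.smul (pr y) b
  pr_gr : ∀ {i : ℤ} {y}, y ∈ T.gr i → pr y ∈ N.gr i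
  pr_d : ∀ y, pr (T.d y) = N.d (pr y)
  pr_t : ∀ m b, pr (t m b) = N.smul m b

/-- `N` is naïvely liftable to `A`: the DG `B`-module epimorphism
`π_N : N|_A ⊗_A B → N` has a right inverse in the category of DG `B`-modules. -/
def NaivelyLiftable {P : EnvSetup R} {N : DGMod P.B} (σ : TensorAB P N) : Prop :=
  ∃ ρ : N.carrier → σ.T.carrier, IsGLin N σ.T 0 ρ ∧
    (∀ x, σ.T.d (ρ x) = ρ (N.d x)) ∧ ∀ x, σ.pr (ρ x) = x

end DG
/- Part 3 appended to common -/
namespace DG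

variable {R : Type u} [CommRing R]

/-- A DG `Bᵉ`-module `X` regarded as a DG `B`-module via `inr : B → Bᵉ`
(e.g. when `XJ = 0`, via `B ≅ Bᵉ/J`). -/
def EnvSetup.toBMod (P : EnvSetup R) (X : DGMod P.E) : DGMod P.B where
  carrier := X.carrier
  acg := X.acg
  mod := X.mod
  smul x b := X.smul x (P.inr.toFun b)
  smul_add m a b := by simp only [P.inr.map_add, X.smul_add]
  add_smul m n a := by simp only [X.add_smul]
  smul_rsmul r m a := by simp only [X.smul_rsmul]
  smul_one m := by simp only [P.inr.map_one, X.smul_one]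
  smul_mul m a b := by simp only [P.inr.map_mul, X.smul_mul]
  smul_algebraMap r m := by simp only [P.inr.map_algebraMap, X.smul_algebraMap]
  gr := X.gr
  internal := X.internal
  smul_mem h1 h2 := X.smul_mem h1 (P.inr.map_gr h2)
  d := X.d
  d_mem := X.d_mem
  d_d := X.d_d
  leibniz a h := by
    simp only [P.inr.map_d]
    exact X.leibniz (P.inr.toFun a) h

/-- A DG algebra `S` regarded as a DG module over itself. -/
def DGAlg.toSelfMod (S : DGAlg R) : DGMod S where
  carrier := S.carrier
  smul a b := a * b
  smul_add := mul_add
  add_smul := add_mul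
  smul_rsmul r m a := smul_mul_assoc r m a
  smul_one := mul_one
  smul_mul m a b := (mul_assoc m a b).symm
  smul_algebraMap r m := by rw [Algebra.smul_def, Algebra.commutes]
  gr := S.gr
  internal := S.internal
  smul_mem := S.mul_mem
  d := S.d
  d_mem := S.d_mem
  d_d := S.d_d
  leibniz := S.leibniz

/-- The DG tensor product `N ⊗_B X` of two DG `B`-modules. -/
structure TensorBB (P : EnvSetup R) (N X : DGMod P.B) : Type (u + 1) where
  T : DGMod P.B
  t : N.carrier → X.carrier → T.carrier
  t_addl : ∀ m m' x, t (m + m') x = t m x + t m' x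
  t_addr : ∀ m x x', t m (x + x') = t m x + t m x'
  t_rsml : ∀ (r : R) m x, t (r • m) x = r • t m x
  t_rsmr : ∀ (r : R) m x, t m (r • x) = r • t m x
  t_smul : ∀ m x b, t m (X.smul x b) = T.smul (t m x) b
  t_bal : ∀ {i j : ℤ} (m : N.carrier) (x : X.carrier) (b : P.B.carrier),
    b ∈ P.B.gr i → x ∈ X.gr j →
    t (N.smul m b) x = sgn (i * j) • t m (X.smul x b)
  t_gr : ∀ {i j : ℤ} {m x}, m ∈ N.gr i → x ∈ X.gr j → t m x ∈ T.gr (i + j)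
  t_d : ∀ {i : ℤ} (m x), m ∈ N.gr i → T.d (t m x) = t (N.d m) x + sgn i • t m (X.d x)
  span : ∀ y : T.carrier, y ∈ Submodule.span R {z : T.carrier | ∃ m x, z = t m x}
  univ : ∀ (Q : Type u) [AddCommGroup Q] [Module R Q] (h : N.carrier → X.carrier → Q),
    (∀ m m' x, h (m + m') x = h m x + h m' x) →
    (∀ m x x', h m (x + x') = h m x + h m x') →
    (∀ (r : R) m x, h (r • m) x = r • h m x) →
    (∀ (r : R) m x, h m (r • x) = r • h m x) →
    (∀ {i j : ℤ} (m x) (b : P.B.carrier), b ∈ P.B.gr i → x ∈ X.gr j →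
      h (N.smul m b) x = sgn (i * j) • h m (X.smul x b)) →
    ∃! H : T.carrier →ₗ[R] Q, ∀ m x, H (t m x) = h m x

/-- `D : B → X` is an `A`-derivation of degree `n` with values in the DG `B`-module `X`. -/
def IsDerB (P : EnvSetup R) (X : DGMod P.B) (n : ℤ) (D : P.B.carrier → X.carrier) : Prop :=
  (∀ b c, D (b + c) = D b + D c) ∧
  (∀ (r : R) b, D (r • b) = r • D b) ∧
  (∀ (b : P.B.carrier) (a : P.A.carrier),
    D (b * P.φ.toFun a) = X.smul (D b) (P.φ.toFun a)) ∧
  (∀ i : ℤ, ∀ b ∈ P.B.gr i, D b ∈ X.gr (i + n)) ∧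
  (∀ (i j : ℤ) (b c : P.B.carrier), b ∈ P.B.gr i → c ∈ P.B.gr j →
    D (b * c) = X.smul (D b) c + sgn (i * j) • X.smul (D c) b)

/-- `D` belongs to `Der_A(B,X)` for a DG `B`-module `X`. -/
def InSDerB (P : EnvSetup R) (X : DGMod P.B) (D : P.B.carrier → X.carrier) : Prop :=
  ∃ (s : Finset ℤ) (g : ℤ → P.B.carrier → X.carrier),
    (∀ n ∈ s, IsDerB P X n (g n)) ∧ ∀ b, D b = ∑ n ∈ s, g n b

/-- `ψ : N → N ⊗_B X` is a `D`-connection on `N` along the DG `B`-module `X`. -/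
def IsConnB {P : EnvSetup R} {N X : DGMod P.B} (τ : TensorBB P N X)
    (n : ℤ) (D : P.B.carrier → X.carrier) (ψ : N.carrier → τ.T.carrier) : Prop :=
  (∀ x y : N.carrier, ψ (x + y) = ψ x + ψ y) ∧
  (∀ (r : R) (x : N.carrier), ψ (r • x) = r • ψ x) ∧
  (∀ i : ℤ, ∀ x ∈ N.gr i, ψ x ∈ τ.T.gr (i + n)) ∧
  (∀ (i : ℤ) (x : N.carrier) (b : P.B.carrier), x ∈ N.gr i →
    ψ (N.smul x b) = τ.T.smul (ψ x) b + sgn (n * i) • τ.t x (D b))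

/-- A `Der_A(B,X)`-connection on `N` along a DG `B`-module `X` (equivalently, a DG
`B`-module splitting of `ν : Conn(N, N ⊗_B X) → Der_A(B,X)`). -/
def IsLConnB {P : EnvSetup R} {N X : DGMod P.B} (τ : TensorBB P N X)
    (Cn : (P.B.carrier → X.carrier) → N.carrier → τ.T.carrier) : Prop :=
  (∀ (n : ℤ) (D), IsDerB P X n D → IsConnB τ n D (Cn D)) ∧
  (∀ D D', InSDerB P X D → InSDerB P X D' →
    ∀ x, Cn (fun b => D b + D' b) x = Cn D x + Cn D' x) ∧
  (∀ (r : R) (D), InSDerB P X D → ∀ x, Cn (fun b => r • D b) x = r • Cn D x) ∧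
  (∀ (k n : ℤ) (b : P.B.carrier) (D), b ∈ P.B.gr k → IsDerB P X n D →
    ∀ x, Cn (fun c => X.lsmul b (D c)) x = τ.T.lsmul b (Cn D x)) ∧
  (∀ (n : ℤ) (D), IsDerB P X n D →
    ∀ x, Cn (fun b => X.d (D b) - sgn n • D (P.B.d b)) x
      = τ.T.d (Cn D x) - sgn n • Cn D (N.d x))

/-- `D : B → B` is an `A`-derivation of `B` of degree `n` (an element of
`Der_A(B) = Der_A(B,B)`). -/
def IsDerSelf (P : EnvSetup R) (n : ℤ) (D : P.B.carrier → P.B.carrier) : Prop :=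
  (∀ b c, D (b + c) = D b + D c) ∧
  (∀ (r : R) b, D (r • b) = r • D b) ∧
  (∀ (b : P.B.carrier) (a : P.A.carrier), D (b * P.φ.toFun a) = D b * P.φ.toFun a) ∧
  (∀ i : ℤ, ∀ b ∈ P.B.gr i, D b ∈ P.B.gr (i + n)) ∧
  (∀ (i j : ℤ) (b c : P.B.carrier), b ∈ P.B.gr i → c ∈ P.B.gr j →
    D (b * c) = D b * c + sgn (i * j) • (D c * b))

/-- `D` belongs to `Der_A(B) = ⊕_{n ∈ ℤ} Der_A(B)_n`. -/
def InSDerSelf (P : EnvSetup R) (D : P.B.carrier → P.B.carrier) : Prop :=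
  ∃ (s : Finset ℤ) (g : ℤ → P.B.carrier → P.B.carrier),
    (∀ n ∈ s, IsDerSelf P n (g n)) ∧ ∀ b, D b = ∑ n ∈ s, g n b

/-- `ψ : N → N` is a `D`-connection on `N` along `B` (identifying `N ⊗_B B ≅ N`):
`ψ(xb) = ψ(x)b + (-1)^{|D||x|} x D(b)`. -/
def IsConnSelf (P : EnvSetup R) (N : DGMod P.B) (n : ℤ)
    (D : P.B.carrier → P.B.carrier) (ψ : N.carrier → N.carrier) : Prop :=
  (∀ x y : N.carrier, ψ (x + y) = ψ x + ψ y) ∧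
  (∀ (r : R) (x : N.carrier), ψ (r • x) = r • ψ x) ∧
  (∀ i : ℤ, ∀ x ∈ N.gr i, ψ x ∈ N.gr (i + n)) ∧
  (∀ (i : ℤ) (x : N.carrier) (b : P.B.carrier), x ∈ N.gr i →
    ψ (N.smul x b) = N.smul (ψ x) b + sgn (n * i) • N.smul x (D b))

/-- A `Der_A(B)`-connection on `N` (along `B`). -/
def IsLConnSelf (P : EnvSetup R) (N : DGMod P.B)
    (Cn : (P.B.carrier → P.B.carrier) → N.carrier → N.carrier) : Prop :=
  (∀ (n : ℤ) (D), IsDerSelf P n D → IsConnSelf P N n D (Cn D)) ∧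
  (∀ D D', InSDerSelf P D → InSDerSelf P D' →
    ∀ x, Cn (fun b => D b + D' b) x = Cn D x + Cn D' x) ∧
  (∀ (r : R) (D), InSDerSelf P D → ∀ x, Cn (fun b => r • D b) x = r • Cn D x) ∧
  (∀ (k n : ℤ) (b : P.B.carrier) (D), b ∈ P.B.gr k → IsDerSelf P n D →
    ∀ x, Cn (fun c => b * D c) x = N.lsmul b (Cn D x)) ∧
  (∀ (n : ℤ) (D), IsDerSelf P n D →
    ∀ x, Cn (fun b => P.B.d (D b) - sgn n • D (P.B.d b)) x
      = N.d (Cn D x) - sgn n • Cn D (N.d x))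

/-- The trivial `D`-connection `φ(D)` on a graded-free DG `B`-module `N` with
homogeneous basis `e` (of degrees `deg`), along a DG `Bᵉ`-module `X`:
`φ(D)(Σ e_λ b_λ) = Σ (-1)^{|D||e_λ|} e_λ ⊗ D(b_λ)`. -/
noncomputable def trivConn {P : EnvSetup R} {N : DGMod P.B} {X : DGMod P.E}
    (τ : TensorBX P N X) {ι : Type u} (e : ι → N.carrier) (deg : ι → ℤ)
    (hb : Function.Bijective fun c : ι →₀ P.B.carrier => c.sum fun l b => N.smul (e l) b)
    (n : ℤ) (D : P.B.carrier → X.carrier) : N.carrier → τ.T.carrier :=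
  fun x => ((Equiv.ofBijective _ hb).symm x).sum fun l b => sgn (n * deg l) • τ.t (e l) (D b)

/-- The trivial `D`-connection on a graded-free DG `B`-module `N` along `B`
(identifying `N ⊗_B B ≅ N`). -/
noncomputable def trivConnSelf {P : EnvSetup R} (N : DGMod P.B) {ι : Type u}
    (e : ι → N.carrier) (deg : ι → ℤ)
    (hb : Function.Bijective fun c : ι →₀ P.B.carrier => c.sum fun l b => N.smul (e l) b)
    (n : ℤ) (D : P.B.carrier → P.B.carrier) : N.carrier → N.carrier :=
  fun x => ((Equiv.ofBijective _ hb).symm x).sum fun l b => sgn (n * deg l) • N.smul (e l) (D b)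

/-- The Atiyah homomorphism `α : N → N ⊗_B J(-1)` of a semifree DG `B`-module `N` with
semifree basis `e` and structure coefficients `cf` (`∂(e_λ) = Σ_μ e_μ (cf λ)_μ`):
the `B`-linear map with `α(e_λ) = Σ_μ e_μ ⊗ δ((cf λ)_μ)`. -/
noncomputable def atiyah {P : EnvSetup R} {N : DGMod P.B} (τ : TensorBX P N P.J)
    {ι : Type u} (e : ι → N.carrier)
    (hb : Function.Bijective fun c : ι →₀ P.B.carrier => c.sum fun l b => N.smul (e l) b)
    (cf : ι → ι →₀ P.B.carrier) : N.carrier → τ.T.carrier :=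
  fun x => ((Equiv.ofBijective _ hb).symm x).sum fun l b =>
    τ.T.smul ((cf l).sum fun m b' => τ.t (e m) (P.δ b')) b

/-- The classical Atiyah map `ᾱ : N → N ⊗_B Ω(-1)` (or more generally the analogue of the
Atiyah homomorphism along a DG `B`-module `X` with respect to a derivation-like map
`D0 : B → X`): the `B`-linear map with `ᾱ(e_λ) = Σ_μ e_μ ⊗ D0((cf λ)_μ)`. -/
noncomputable def atiyahB {P : EnvSetup R} {N X : DGMod P.B} (τ : TensorBB P N X)
    {ι : Type u} (e : ι → N.carrier)
    (hb : Function.Bijective fun c : ι →₀ P.B.carrier => c.sum fun l b => N.smul (e l) b)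
    (cf : ι → ι →₀ P.B.carrier) (D0 : P.B.carrier → X.carrier) : N.carrier → τ.T.carrier :=
  fun x => ((Equiv.ofBijective _ hb).symm x).sum fun l b =>
    τ.T.smul ((cf l).sum fun m b' => τ.t (e m) (D0 b')) b

/-- The Kodaira–Spencer homomorphism `κ(D) = [∂^N, φ(D)] - φ([d^B, D])` on a graded-free
DG `B`-module `N` with respect to the homogeneous basis `e`. -/
noncomputable def kappa {P : EnvSetup R} (N : DGMod P.B) {ι : Type u}
    (e : ι → N.carrier) (deg : ι → ℤ)
    (hb : Function.Bijective fun c : ι →₀ P.B.carrier => c.sum fun l b => N.smul (e l) b)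
    (n : ℤ) (D : P.B.carrier → P.B.carrier) : N.carrier → N.carrier :=
  fun x =>
    (N.d (trivConnSelf N e deg hb n D x) - sgn n • trivConnSelf N e deg hb n D (N.d x))
      - trivConnSelf N e deg hb (n - 1) (fun b => P.B.d (D b) - sgn n • D (P.B.d b)) x

/-- The setup of the paper enriched with the differential module
`Ω = Ω_A(B) = J/J²` of `B` over `A`, a DG `B`-module with the natural
projection `pOm : J → Ω` whose kernel is `J²`. -/
structure OmegaSetup (R : Type u) [CommRing R] : Type (u + 1) where
  env : EnvSetup R
  Ω : DGMod env.B
  pOm : env.J.carrier → Ω.carrier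
  pOm_add : ∀ x y, pOm (x + y) = pOm x + pOm y
  pOm_rsmul : ∀ (r : R) x, pOm (r • x) = r • pOm x
  pOm_surj : Function.Surjective pOm
  pOm_gr : ∀ {i : ℤ} {x}, x ∈ env.J.gr i → pOm x ∈ Ω.gr i
  pOm_d : ∀ x, pOm (env.J.d x) = Ω.d (pOm x)
  pOm_smul : ∀ x ee, pOm (env.J.smul x ee) = Ω.smul (pOm x) (env.mulB.toFun ee)
  pOm_ker : ∀ x, pOm x = 0 ↔
    env.ιJ x ∈ Submodule.span R
      {y : env.E.carrier | ∃ u v : env.J.carrier, y = env.ιJ u * env.ιJ v}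

/-- The universal derivation `δ̄ : B → Ω = J/J²` induced by `δ`. -/
def OmegaSetup.δbar (Q : OmegaSetup R) : Q.env.B.carrier → Q.Ω.carrier :=
  fun b => Q.pOm (Q.env.δ b)

end DG

/-!
Both sides are additive, so it suffices to compare them on the elements `e_λ b`. The trivial
connection satisfies the Leibniz rule `φ(δ)(x b) = φ(δ)(x) b + x ⊗ δ(b)`, because `δ` is a
derivation of degree `0`. Applying it to `∂(e_λ b) = ∂(e_λ) b ± e_λ ∂(b)`, and using that `δ`
commutes with the differentials, the terms `∂(e_λ) ⊗ δ(b)` and `e_λ ⊗ δ(∂b)` cancel against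
`∂(e_λ ⊗ δ(b))`, leaving `φ(δ)(∂ e_λ) b = α(e_λ) b = α(e_λ b)`.
-/

namespace DG

universe u

section

variable {R : Type u} [CommRing R]

theorem sgn_zero : sgn 0 = 1 := by
  simp [sgn]

@[elab_as_elim]
theorem DGAlg.induction_on_homogeneous (S : DGAlg R) {motive : S.carrier → Prop}
    (a : S.carrier) (mem : ∀ i, ∀ a ∈ S.gr i, motive a) (zero : motive 0)
    (add : ∀ a b, motive a → motive b → motive (a + b)) : motive a :=
  Submodule.iSup_induction S.gr (motive := motive)
    (by rw [S.internal.submodule_iSup_eq_top]; trivial) mem zero add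

theorem DGHom.map_smul {S T : DGAlg R} (f : DGHom S T) (r : R) (a : S.carrier) :
    f.toFun (r • a) = r • f.toFun a := by
  rw [Algebra.smul_def, f.map_mul, f.map_algebraMap, ← Algebra.smul_def]

namespace DGMod

variable {S : DGAlg R} (M : DGMod S)

theorem smul_zero (m : M.carrier) : M.smul m 0 = 0 :=
  (AddMonoidHom.mk' (M.smul m) (M.smul_add m)).map_zero

theorem zero_smul (a : S.carrier) : M.smul 0 a = 0 :=
  (AddMonoidHom.mk' (M.smul · a) (M.add_smul · · a)).map_zero

theorem sum_smul_basis_single {ι : Type*} (e : ι → M.carrier) (l : ι) (a : S.carrier) :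
    ((Finsupp.single l a).sum fun l b => M.smul (e l) b) = M.smul (e l) a :=
  Finsupp.sum_single_index (M.smul_zero _)

@[elab_as_elim]
theorem induction_on_basis {ι : Type*} {e : ι → M.carrier}
    (hspan : Function.Surjective fun c : ι →₀ S.carrier => c.sum fun l b => M.smul (e l) b)
    {motive : M.carrier → Prop} (x : M.carrier) (smul : ∀ l b, motive (M.smul (e l) b))
    (zero : motive 0) (add : ∀ x y, motive x → motive y → motive (x + y)) : motive x := by
  obtain ⟨c, rfl⟩ := hspan x
  beta_reduce
  induction c using Finsupp.induction with
  | zero => rwa [Finsupp.sum_zero_index]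
  | single_add l b c _ _ ih =>
    rw [Finsupp.sum_add_index' (fun l => M.smul_zero (e l)) fun l => M.smul_add (e l),
      sum_smul_basis_single]
    exact add _ _ (smul l b) ih

variable {M} {ι : Type*} {e : ι → M.carrier}
  (hb : Function.Bijective fun c : ι →₀ S.carrier => c.sum fun l b => M.smul (e l) b)

theorem ofBijective_symm_add (x y : M.carrier) :
    (Equiv.ofBijective _ hb).symm (x + y)
      = (Equiv.ofBijective _ hb).symm x + (Equiv.ofBijective _ hb).symm y := by
  rw [Equiv.symm_apply_eq, Equiv.ofBijective_apply,
    Finsupp.sum_add_index' (fun l => M.smul_zero (e l)) fun l => M.smul_add (e l)]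
  exact congrArg₂ (· + ·) ((Equiv.ofBijective _ hb).apply_symm_apply x).symm
    ((Equiv.ofBijective _ hb).apply_symm_apply y).symm

theorem sum_ofBijective_symm_add {Q : Type*} [AddCommMonoid Q] {h : ι → S.carrier → Q}
    (h_zero : ∀ l, h l 0 = 0) (h_add : ∀ l a b, h l (a + b) = h l a + h l b)
    (x y : M.carrier) :
    ((Equiv.ofBijective _ hb).symm (x + y)).sum h
      = ((Equiv.ofBijective _ hb).symm x).sum h + ((Equiv.ofBijective _ hb).symm y).sum h := by
  rw [ofBijective_symm_add, Finsupp.sum_add_index' h_zero h_add]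

theorem sum_ofBijective_symm_smul_basis {Q : Type*} [AddCommMonoid Q] {h : ι → S.carrier → Q}
    (h_zero : ∀ l, h l 0 = 0) (l : ι) (b : S.carrier) :
    ((Equiv.ofBijective _ hb).symm (M.smul (e l) b)).sum h = h l b := by
  rw [← M.sum_smul_basis_single e, Equiv.ofBijective_symm_apply_apply,
    Finsupp.sum_single_index (h_zero l)]

end DGMod

theorem IsDer.map_zero {P : EnvSetup R} {X : DGMod P.E} {n : ℤ} {D : P.B.carrier → X.carrier}
    (hD : IsDer P X n D) : D 0 = 0 :=
  (AddMonoidHom.mk' D hD.1).map_zero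

namespace EnvSetup

variable (P : EnvSetup R)

theorem ιJ_zsmul (n : ℤ) (x : P.J.carrier) : P.ιJ (n • x) = n • P.ιJ x :=
  map_zsmul (AddMonoidHom.mk' P.ιJ P.ιJ_add) n x

theorem isDer_δ : IsDer P P.J 0 P.δ := by
  refine ⟨fun b c => P.ιJ_inj ?_, fun r b => P.ιJ_inj ?_, fun b a => P.ιJ_inj ?_,
    fun i b hb => ?_, fun i j b c hb hc => P.ιJ_inj ?_⟩
  · rw [P.ιJ_add, P.ιJ_δ, P.ιJ_δ, P.ιJ_δ, P.inl.map_add, P.inr.map_add]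
    abel
  · rw [P.ιJ_rsmul, P.ιJ_δ, P.ιJ_δ, P.inl.map_smul, P.inr.map_smul, smul_sub]
  · rw [P.ιJ_smul, P.ιJ_δ, P.ιJ_δ, P.inl.map_mul, P.inr.map_mul, P.inl_inr_phi, sub_mul]
  · rw [add_zero, P.ιJ_gr, P.ιJ_δ]
    exact sub_mem (P.inl.map_gr hb) (P.inr.map_gr hb)
  · -- graded commutativity of `Bᵉ` moves `b ⊗ 1` past `c ⊗ 1 - 1 ⊗ c`
    rw [P.ιJ_add, P.ιJ_zsmul, P.ιJ_smul, P.ιJ_smul, P.ιJ_δ, P.ιJ_δ, P.ιJ_δ,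
      P.inl.map_mul, P.inr.map_mul,
      ← P.E.gcomm (P.inl.map_gr hb) (sub_mem (P.inl.map_gr hc) (P.inr.map_gr hc)),
      sub_mul, mul_sub]
    abel

theorem δ_d (b : P.B.carrier) : P.δ (P.B.d b) = P.J.d (P.δ b) := by
  apply P.ιJ_inj
  rw [P.ιJ_δ, P.ιJ_d, P.ιJ_δ, map_sub, ← P.inl.map_d, ← P.inr.map_d]

end EnvSetup

namespace TensorBX

variable {P : EnvSetup R} {N : DGMod P.B} {X : DGMod P.E} (τ : TensorBX P N X)

theorem t_zero_left (x : X.carrier) : τ.t 0 x = 0 :=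
  (AddMonoidHom.mk' (τ.t · x) (τ.t_addl · · x)).map_zero

theorem t_zero_right (m : N.carrier) : τ.t m 0 = 0 :=
  (AddMonoidHom.mk' (τ.t m) (τ.t_addr m)).map_zero

theorem t_zsmul_right (n : ℤ) (m : N.carrier) (x : X.carrier) : τ.t m (n • x) = n • τ.t m x :=
  map_zsmul (AddMonoidHom.mk' (τ.t m) (τ.t_addr m)) n x

theorem t_map_mul {D : P.B.carrier → X.carrier} (hD : IsDer P X 0 D) (m : N.carrier)
    (a b : P.B.carrier) :
    τ.t m (D (a * b)) = τ.T.smul (τ.t m (D a)) b + τ.t (N.smul m a) (D b) := by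
  induction b using P.B.induction_on_homogeneous with
  | mem j b hb =>
    induction a using P.B.induction_on_homogeneous with
    | mem i a ha =>
      have hDb := add_zero j ▸ hD.2.2.2.1 j b hb
      rw [hD.2.2.2.2 i j a b ha hb, τ.t_addr, τ.t_smul, t_zsmul_right, τ.t_bal m (D b) a ha hDb]
    | zero => simp only [zero_mul, hD.map_zero, t_zero_right, τ.T.zero_smul, N.smul_zero,
        t_zero_left, add_zero]
    | add a a' ha ha' =>
      rw [add_mul, hD.1, τ.t_addr, ha, ha', hD.1, τ.t_addr, τ.T.add_smul, N.smul_add, τ.t_addl]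
      abel
  | zero => simp only [mul_zero, hD.map_zero, t_zero_right, τ.T.smul_zero, add_zero]
  | add b b' hb hb' =>
    rw [mul_add, hD.1, τ.t_addr, hb, hb', hD.1, τ.t_addr, τ.T.smul_add]
    abel

end TensorBX

section TrivialConnection

variable {P : EnvSetup R} {N : DGMod P.B} {ι : Type u} {e : ι → N.carrier}
  (hb : Function.Bijective fun c : ι →₀ P.B.carrier => c.sum fun l b => N.smul (e l) b)
  {X : DGMod P.E} (τ : TensorBX P N X) (deg : ι → ℤ) {n : ℤ} {D : P.B.carrier → X.carrier}

theorem trivConn_sum_smul_basis (c : ι →₀ P.B.carrier) :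
    trivConn τ e deg hb n D (c.sum fun l b => N.smul (e l) b)
      = c.sum fun l b => sgn (n * deg l) • τ.t (e l) (D b) :=
  congrArg (Finsupp.sum · _) (Equiv.ofBijective_symm_apply_apply _ hb c)

theorem trivConn_smul_basis (hD : IsDer P X n D) (l : ι) (b : P.B.carrier) :
    trivConn τ e deg hb n D (N.smul (e l) b) = sgn (n * deg l) • τ.t (e l) (D b) :=
  DGMod.sum_ofBijective_symm_smul_basis hb
    (fun l => by rw [hD.map_zero, τ.t_zero_right, smul_zero]) l b

theorem trivConn_add (hD : IsDer P X n D) (x y : N.carrier) :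
    trivConn τ e deg hb n D (x + y) = trivConn τ e deg hb n D x + trivConn τ e deg hb n D y :=
  DGMod.sum_ofBijective_symm_add hb (fun l => by rw [hD.map_zero, τ.t_zero_right, smul_zero])
    (fun l a b => by rw [hD.1, τ.t_addr, smul_add]) x y

theorem trivConn_zero (hD : IsDer P X n D) : trivConn τ e deg hb n D 0 = 0 :=
  (AddMonoidHom.mk' _ (trivConn_add hb τ deg hD)).map_zero

theorem trivConn_zsmul (hD : IsDer P X n D) (k : ℤ) (x : N.carrier) :
    trivConn τ e deg hb n D (k • x) = k • trivConn τ e deg hb n D x :=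
  map_zsmul (AddMonoidHom.mk' _ (trivConn_add hb τ deg hD)) k x

theorem trivConn_leibniz (hD : IsDer P X 0 D) (x : N.carrier) (b : P.B.carrier) :
    trivConn τ e deg hb 0 D (N.smul x b)
      = τ.T.smul (trivConn τ e deg hb 0 D x) b + τ.t x (D b) := by
  induction x using DGMod.induction_on_basis N hb.2 with
  | smul l a =>
    simp only [← N.smul_mul, trivConn_smul_basis hb τ deg hD, zero_mul, sgn_zero, one_smul]
    exact τ.t_map_mul hD (e l) a b
  | zero => rw [N.zero_smul, trivConn_zero hb τ deg hD, τ.T.zero_smul, τ.t_zero_left, add_zero]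
  | add x y hx hy =>
    rw [N.add_smul, trivConn_add hb τ deg hD, hx, hy, trivConn_add hb τ deg hD, τ.T.add_smul,
      τ.t_addl]
    abel

end TrivialConnection

section Atiyah

variable {P : EnvSetup R} {N : DGMod P.B} {ι : Type u} {e : ι → N.carrier}
  (hb : Function.Bijective fun c : ι →₀ P.B.carrier => c.sum fun l b => N.smul (e l) b)
  (τ : TensorBX P N P.J) (cf : ι → ι →₀ P.B.carrier)

theorem atiyah_smul_basis (l : ι) (b : P.B.carrier) :
    atiyah τ e hb cf (N.smul (e l) b)
      = τ.T.smul ((cf l).sum fun m b' => τ.t (e m) (P.δ b')) b :=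
  DGMod.sum_ofBijective_symm_smul_basis hb (fun _ => τ.T.smul_zero _) l b

theorem atiyah_add (x y : N.carrier) :
    atiyah τ e hb cf (x + y) = atiyah τ e hb cf x + atiyah τ e hb cf y :=
  DGMod.sum_ofBijective_symm_add hb (fun _ => τ.T.smul_zero _) (fun _ => τ.T.smul_add _) x y

theorem atiyah_zero : atiyah τ e hb cf 0 = 0 :=
  (AddMonoidHom.mk' _ (atiyah_add hb τ cf)).map_zero

theorem atiyah_smul_basis_eq_trivConn (deg : ι → ℤ) (hmem : ∀ l, e l ∈ N.gr (deg l))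
    (hdN : ∀ l, N.d (e l) = (cf l).sum fun m b => N.smul (e m) b) (l : ι) (b : P.B.carrier) :
    atiyah τ e hb cf (N.smul (e l) b)
      = trivConn τ e deg hb 0 P.δ (N.d (N.smul (e l) b))
        - τ.T.d (trivConn τ e deg hb 0 P.δ (N.smul (e l) b)) := by
  have hδ := P.isDer_δ
  have hφ_basis : ∀ m c, trivConn τ e deg hb 0 P.δ (N.smul (e m) c) = τ.t (e m) (P.δ c) :=
    fun m c => by rw [trivConn_smul_basis hb τ deg hδ, zero_mul, sgn_zero, one_smul]
  have hφ_d_basis : trivConn τ e deg hb 0 P.δ (N.d (e l))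
      = (cf l).sum fun m b' => τ.t (e m) (P.δ b') := by
    simp only [hdN, trivConn_sum_smul_basis, zero_mul, sgn_zero, one_smul]
  rw [atiyah_smul_basis, N.leibniz b (hmem l), trivConn_add hb τ deg hδ,
    trivConn_zsmul hb τ deg hδ, trivConn_leibniz hb τ deg hδ, hφ_d_basis, hφ_basis, hφ_basis,
    τ.t_d _ _ (hmem l), P.δ_d]
  abel

end Atiyah

end

theorem atiyah_eq_neg_d_trivial_connection_general {R : Type u} [CommRing R] {P : EnvSetup R}
    {N : DGMod P.B} (τ : TensorBX P N P.J)
    {ι : Type u}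
    (e : ι → N.carrier) (deg : ι → ℤ) (hmem : ∀ l, e l ∈ N.gr (deg l))
    (hb : Function.Bijective fun c : ι →₀ P.B.carrier =>
      c.sum fun l b => N.smul (e l) b)
    (cf : ι → ι →₀ P.B.carrier)
    (hdN : ∀ l, N.d (e l) = (cf l).sum fun m b => N.smul (e m) b) :
    ∀ x, atiyah τ e hb cf x
      = -(τ.T.d (trivConn τ e deg hb 0 P.δ x)
          - trivConn τ e deg hb 0 P.δ (N.d x)) := by
  have hδ := P.isDer_δ
  intro x
  rw [neg_sub]
  induction x using DGMod.induction_on_basis N hb.2 with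
  | smul l b => exact atiyah_smul_basis_eq_trivConn hb τ cf deg hmem hdN l b
  | zero => rw [atiyah_zero, map_zero, trivConn_zero hb τ deg hδ, map_zero, sub_zero]
  | add x y hx hy =>
    rw [atiyah_add, hx, hy, map_add, trivConn_add hb τ deg hδ, trivConn_add hb τ deg hδ, map_add]
    abel

/-- For a semifree DG `B`-module `N` with semifree basis `{e_λ}`
(`∂^N(e_λ) = Σ_{μ<λ} e_μ b_{μλ}`), the Atiyah homomorphism `α : N → N ⊗_B J(-1)`
satisfies `α = -∂^Conn(φ(δ))`, where `φ(δ)` is the trivial `δ`-connection on `N`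
along `J` with respect to `{e_λ}` (and `δ` has degree `0`). -/
theorem atiyah_eq_neg_d_trivial_connection {R : Type u} [CommRing R] {P : EnvSetup R}
    {N : DGMod P.B} (τ : TensorBX P N P.J)
    {ι : Type u} [LinearOrder ι] [WellFoundedLT ι]
    (e : ι → N.carrier) (deg : ι → ℤ) (hmem : ∀ l, e l ∈ N.gr (deg l))
    (hb : Function.Bijective fun c : ι →₀ P.B.carrier =>
      c.sum fun l b => N.smul (e l) b)
    (cf : ι → ι →₀ P.B.carrier) (hsupp : ∀ l m, m ∈ (cf l).support → m < l)
    (hdN : ∀ l, N.d (e l) = (cf l).sum fun m b => N.smul (e m) b) :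
    ∀ x, atiyah τ e hb cf x
      = -(τ.T.d (trivConn τ e deg hb 0 P.δ x)
          - trivConn τ e deg hb 0 P.δ (N.d x)) :=
  atiyah_eq_neg_d_trivial_connection_general τ e deg hmem hb cf hdN

end DG
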